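/- arXiv:2005.05515 — 7 statements merged into one kernel-verified Lean document; each statement's English description precedes it below -/
import Mathlib

section
/- Let a, b, c, d be complex numbers satisfying condition (B), and let A = [[aJ, A₁₂],[A₂₁, bJ]] be a 4×4 complex matrix in 2×2 blocks (A₁₂, A₂₁ arbitrary) that is similar to the diagonal matrix diag(c, −c, d, −d). For ξ = c and ξ = −c let v_ξ = (v_ξ¹, v_ξ², v_ξ³, v_ξ⁴) be row vectors with v_ξ·A = ξ·v_ξ, and suppose v_ξᵏ ≠ 0 for all k = 1,2,3,4 and ξ = ±c, and det [[v_{−c}ˡ, v_{−c}^{l+1}],[v_cˡ, v_c^{l+1}]] ≠ 0 for l = 1, 3. Then, setting r_k = v_{−c}ᵏ / v_cᵏ (k = 1,2,3,4), the numbers r₁, r₂, r₃, r₄ satisfy condition (R) and condition (D), and the invertible diagonal matrix D = diag(v_c¹, v_c², v_c³, v_c⁴) satisfies D·A·D⁻¹ = A₁, where A₁ is the parametrized matrix built from a, b, c, d, r₁, r₂, r₃, r₄. -/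
/-!
Conjugating by `D = diag(v_c)` sends `v_c` to the all-ones vector and `v_{-c}` to `r = (r_k)`, so
`B = D A D⁻¹` keeps the diagonal blocks `aJ`, `bJ`, has all column sums `c`, and satisfies
`r B = -c r`. Column by column, the entries of an off-diagonal block then solve a linear system
with matrix `[[1, 1], [r_i, r_j]]`, which is invertible because `r₁ ≠ r₂` and `r₃ ≠ r₄`; its
solution is `A₁`. Condition (D) says `tr (A₁²) = 2c² + 2d²`, and this holds because `A₁` is
similar to `diag(c, -c, d, -d)`.
-/

set_option maxHeartbeats 1000000
set_option synthInstance.maxHeartbeats 1000000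
set_option linter.unusedVariables false

noncomputable section
open Matrix

/-- The 2×2 matrix J = diag(1, −1). -/
def Jmat : Matrix (Fin 2) (Fin 2) ℂ := !![1, 0; 0, -1]

/-- The 2×2 block A₁₂′ of the parametrized Okubo coefficient matrix. -/
def A12p (a b c d r1 r2 r3 r4 : ℂ) : Matrix (Fin 2) (Fin 2) ℂ :=
  !![((b-c)*r2-(b+c)*r3)/(r1-r2), ((b+c)*r2-(b-c)*r4)/(r2-r1);
     ((b-c)*r1-(b+c)*r3)/(r2-r1), ((b+c)*r1-(b-c)*r4)/(r1-r2)]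

/-- The 2×2 block A₂₁′ of the parametrized Okubo coefficient matrix. -/
def A21p (a b c d r1 r2 r3 r4 : ℂ) : Matrix (Fin 2) (Fin 2) ℂ :=
  !![((a+c)*r1-(a-c)*r4)/(r4-r3), ((a-c)*r2-(a+c)*r4)/(r3-r4);
     ((a+c)*r1-(a-c)*r3)/(r3-r4), ((a-c)*r2-(a+c)*r3)/(r4-r3)]

/-- The 4×4 parametrized coefficient matrix A₁ = [[aJ, A₁₂′],[A₂₁′, bJ]]. -/
def A1mat (a b c d r1 r2 r3 r4 : ℂ) : Matrix (Fin 4) (Fin 4) ℂ :=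
  !![a, 0, ((b-c)*r2-(b+c)*r3)/(r1-r2), ((b+c)*r2-(b-c)*r4)/(r2-r1);
     0, -a, ((b-c)*r1-(b+c)*r3)/(r2-r1), ((b+c)*r1-(b-c)*r4)/(r1-r2);
     ((a+c)*r1-(a-c)*r4)/(r4-r3), ((a-c)*r2-(a+c)*r4)/(r3-r4), b, 0;
     ((a+c)*r1-(a-c)*r3)/(r3-r4), ((a-c)*r2-(a+c)*r3)/(r4-r3), 0, -b]

/-- The 4×4 accessory-parameter-free matrix A₁* = [[aJ, B₁₂],[B₂₁, bJ]]. -/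
def A1star (a b c d : ℂ) : Matrix (Fin 4) (Fin 4) ℂ :=
  !![a, 0, ((a-b+c)^2-d^2)/(4*a), ((a+b+c)^2-d^2)/(4*a);
     0, -a, (d^2-(a+b-c)^2)/(4*a), (d^2-(a-b-c)^2)/(4*a);
     ((a-b-c)^2-d^2)/(4*b), ((a+b+c)^2-d^2)/(4*b), b, 0;
     (d^2-(a+b-c)^2)/(4*b), (d^2-(a-b+c)^2)/(4*b), 0, -b]

/-- Condition (B): none of the listed combinations is an integer. -/
def condB (a b c d : ℂ) : Prop :=
  ∀ n : ℤ, a ≠ n ∧ b ≠ n ∧ c ≠ n ∧ d ≠ n ∧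
    2*a ≠ n ∧ 2*b ≠ n ∧ 2*c ≠ n ∧ 2*d ≠ n ∧
    a+b ≠ n ∧ a-b ≠ n ∧ a+c ≠ n ∧ a-c ≠ n ∧ a+d ≠ n ∧ a-d ≠ n ∧
    b+c ≠ n ∧ b-c ≠ n ∧ b+d ≠ n ∧ b-d ≠ n ∧ c+d ≠ n ∧ c-d ≠ n

/-- Condition (R): r₁r₂r₃r₄ ≠ 0, r₁ ≠ r₂, r₃ ≠ r₄. -/
def condR (r1 r2 r3 r4 : ℂ) : Prop := r1*r2*r3*r4 ≠ 0 ∧ r1 ≠ r2 ∧ r3 ≠ r4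

/-- Condition (D). -/
def condD (a b c d r1 r2 r3 r4 : ℂ) : Prop :=
  ((a+b+c)^2*r1*r3 - (a-b+c)^2*r1*r4 - (a-b-c)^2*r2*r3 + (a+b-c)^2*r2*r4
    - 4*a*b*(r1*r2) - 4*a*b*(r3*r4)) / ((r1-r2)*(r3-r4)) = d^2

/-- ε = b(a+c)r₁ + b(a−c)r₂ − a(b+c)r₃ − a(b−c)r₄. -/
def epsv (a b c d r1 r2 r3 r4 : ℂ) : ℂ :=
  b*(a+c)*r1 + b*(a-c)*r2 - a*(b+c)*r3 - a*(b-c)*r4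

/-- δ = r₁r₂ − r₃r₄. -/
def deltav (a b c d r1 r2 r3 r4 : ℂ) : ℂ := r1*r2 - r3*r4

/-- ε′ = 2ε/((r₁−r₂)(r₃−r₄)). -/
def epsp (a b c d r1 r2 r3 r4 : ℂ) : ℂ :=
  2*(epsv a b c d r1 r2 r3 r4)/((r1-r2)*(r3-r4))

/-- δ′ = 2δ/((r₁−r₂)(r₃−r₄)). -/
def deltp (a b c d r1 r2 r3 r4 : ℂ) : ℂ :=
  2*(deltav a b c d r1 r2 r3 r4)/((r1-r2)*(r3-r4))

/-- R₁₁. -/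
def R11 (a b c d r1 r2 r3 r4 : ℂ) : Matrix (Fin 2) (Fin 2) ℂ :=
  ((a^2-b^2-c^2-d^2)/2) • (1 : Matrix (Fin 2) (Fin 2) ℂ)
    + (epsp a b c d r1 r2 r3 r4) • !![0, r2; r1, 0]
    - (b * deltp a b c d r1 r2 r3 r4) • !![c, a+c; a-c, -c]

/-- S₁₁. -/
def S11 (a b c d r1 r2 r3 r4 : ℂ) : Matrix (Fin 2) (Fin 2) ℂ :=
  b • (A12p a b c d r1 r2 r3 r4 * Jmat * A21p a b c d r1 r2 r3 r4)
    - (a*b^2) • Jmat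
    - (2*a*b*c * deltp a b c d r1 r2 r3 r4) • (1 : Matrix (Fin 2) (Fin 2) ℂ)

/-- R̃₁₁. -/
def Rt11 (a b c d r1 r2 r3 r4 : ℂ) : Matrix (Fin 2) (Fin 2) ℂ :=
  ((a^2-b^2-c^2-d^2)/2) • (1 : Matrix (Fin 2) (Fin 2) ℂ)
    - (epsp a b c d r1 r2 r3 r4) • !![0, r2; r1, 0]
    + (b * deltp a b c d r1 r2 r3 r4) • !![c, a+c; a-c, -c]

/-- S̃₁₁. -/
def St11 (a b c d r1 r2 r3 r4 : ℂ) : Matrix (Fin 2) (Fin 2) ℂ :=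
  (a*b^2) • Jmat
    - b • (A12p a b c d r1 r2 r3 r4 * Jmat * A21p a b c d r1 r2 r3 r4)

/-- A 4×4 matrix with prescribed diagonal blocks aJ, bJ and arbitrary
off-diagonal 2×2 blocks A₁₂, A₂₁. -/
def blockMat (a b : ℂ) (A12 A21 : Matrix (Fin 2) (Fin 2) ℂ) :
    Matrix (Fin 4) (Fin 4) ℂ :=
  !![a, 0, A12 0 0, A12 0 1;
     0, -a, A12 1 0, A12 1 1;
     A21 0 0, A21 0 1, b, 0;
     A21 1 0, A21 1 1, 0, -b]

section DiagonalConjugation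

variable {n K : Type*} [Fintype n] [DecidableEq n] [Field K]

theorem diagonal_mul_mul_inv_diagonal_apply {v : n → K} (hv : ∀ i, v i ≠ 0)
    (A : Matrix n n K) (i j : n) :
    (diagonal v * A * (diagonal v)⁻¹) i j = v i * A i j / v j := by
  have hinv : (diagonal v)⁻¹ = diagonal v⁻¹ :=
    inv_eq_left_inv (by rw [diagonal_mul_diagonal, ← diagonal_one]; congr 1; ext i; simp [hv i])
  rw [hinv, mul_diagonal, diagonal_mul, Pi.inv_apply, div_eq_mul_inv]

theorem vecMul_div_diagonal_conj {v : n → K} (hv : ∀ i, v i ≠ 0) (w : n → K)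
    (A : Matrix n n K) :
    (w / v) ᵥ* (diagonal v * A * (diagonal v)⁻¹) = (w ᵥ* A) / v := by
  ext j
  simp only [vecMul, dotProduct, diagonal_mul_mul_inv_diagonal_apply hv, Pi.div_apply,
    Finset.sum_div]
  refine Finset.sum_congr rfl fun i _ => ?_
  field_simp [hv i]

end DiagonalConjugation

theorem trace_conj_pow {n R : Type*} [Fintype n] [DecidableEq n] [CommRing R]
    {S : Matrix n n R} (hS : IsUnit S) (A : Matrix n n R) (k : ℕ) :
    trace ((S * A * S⁻¹) ^ k) = trace (A ^ k) := by
  rw [← hS.unit_spec, ← coe_units_inv, Units.conj_pow, coe_units_inv, trace_conj hS.unit.isUnit]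

theorem eq_div_sub_of_add_eq_of_mul_add_mul_eq {K : Type*} [Field K] {p q x y s t : K}
    (hpq : p ≠ q) (hs : x + y = s) (ht : p * x + q * y = t) :
    x = (t - q * s) / (p - q) ∧ y = (t - p * s) / (q - p) := by
  constructor
  · rw [eq_div_iff (sub_ne_zero.2 hpq)]; linear_combination ht - q * hs
  · rw [eq_div_iff (sub_ne_zero.2 hpq.symm)]; linear_combination ht - p * hs

theorem diagonal_conj_blockMat {v : Fin 4 → ℂ} (hv : ∀ i, v i ≠ 0) (a b : ℂ)
    (A12 A21 : Matrix (Fin 2) (Fin 2) ℂ) :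
    diagonal v * blockMat a b A12 A21 * (diagonal v)⁻¹ =
      blockMat a b (of fun i j => v (Fin.castAdd 2 i) * A12 i j / v (Fin.natAdd 2 j))
        (of fun i j => v (Fin.natAdd 2 i) * A21 i j / v (Fin.castAdd 2 j)) := by
  ext i j
  rw [diagonal_mul_mul_inv_diagonal_apply hv]
  fin_cases i <;> fin_cases j <;> simp [blockMat, hv, neg_div, mul_div_cancel_left₀]

theorem blockMat_eq_A1mat {a b c d : ℂ} {P Q : Matrix (Fin 2) (Fin 2) ℂ} {r : Fin 4 → ℂ}
    (h01 : r 0 ≠ r 1) (h23 : r 2 ≠ r 3) (h1 : 1 ᵥ* blockMat a b P Q = c • 1)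
    (hr : r ᵥ* blockMat a b P Q = (-c) • r) :
    blockMat a b P Q = A1mat a b c d (r 0) (r 1) (r 2) (r 3) := by
  have column (j : Fin 4) : ∑ i, blockMat a b P Q i j = c ∧
      ∑ i, r i * blockMat a b P Q i j = -c * r j := by
    simpa [vecMul, dotProduct] using And.intro (congrFun h1 j) (congrFun hr j)
  obtain ⟨s0, t0⟩ := column 0
  obtain ⟨s1, t1⟩ := column 1
  obtain ⟨s2, t2⟩ := column 2
  obtain ⟨s3, t3⟩ := column 3
  simp only [blockMat, Fin.sum_univ_four, Fin.isValue, of_apply, cons_val', cons_val,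
    cons_val_zero, cons_val_one, cons_val_fin_one, add_zero, zero_add, mul_zero, neg_mul,
    mul_neg] at s0 s1 s2 s3 t0 t1 t2 t3
  obtain ⟨hP00, hP10⟩ := eq_div_sub_of_add_eq_of_mul_add_mul_eq h01
    (by linear_combination s2 : P 0 0 + P 1 0 = c - b)
    (by linear_combination t2 : r 0 * P 0 0 + r 1 * P 1 0 = -(b + c) * r 2)
  obtain ⟨hP01, hP11⟩ := eq_div_sub_of_add_eq_of_mul_add_mul_eq h01
    (by linear_combination s3 : P 0 1 + P 1 1 = c + b)
    (by linear_combination t3 : r 0 * P 0 1 + r 1 * P 1 1 = (b - c) * r 3)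
  obtain ⟨hQ00, hQ10⟩ := eq_div_sub_of_add_eq_of_mul_add_mul_eq h23
    (by linear_combination s0 : Q 0 0 + Q 1 0 = c - a)
    (by linear_combination t0 : r 2 * Q 0 0 + r 3 * Q 1 0 = -(a + c) * r 0)
  obtain ⟨hQ01, hQ11⟩ := eq_div_sub_of_add_eq_of_mul_add_mul_eq h23
    (by linear_combination s1 : Q 0 1 + Q 1 1 = c + a)
    (by linear_combination t1 : r 2 * Q 0 1 + r 3 * Q 1 1 = (a - c) * r 1)
  have := sub_ne_zero.2 h01
  have := sub_ne_zero.2 h01.symm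
  have := sub_ne_zero.2 h23
  have := sub_ne_zero.2 h23.symm
  ext i j
  fin_cases i <;> fin_cases j <;>
    simp only [blockMat, A1mat, hP00, hP10, hP01, hP11, hQ00, hQ10, hQ01, hQ11, Fin.isValue,
      Fin.zero_eta, Fin.mk_one, Fin.reduceFinMk, of_apply, cons_val', cons_val, cons_val_zero,
      cons_val_one, cons_val_fin_one] <;>
    rw [div_eq_div_iff (by assumption) (by assumption)] <;> ring

theorem condD_of_trace_A1mat_sq {a b c d r1 r2 r3 r4 : ℂ} (h12 : r1 ≠ r2) (h34 : r3 ≠ r4)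
    (h : trace (A1mat a b c d r1 r2 r3 r4 ^ 2) = 2 * c ^ 2 + 2 * d ^ 2) :
    condD a b c d r1 r2 r3 r4 := by
  have := sub_ne_zero.2 h12
  have := sub_ne_zero.2 h34
  have htrace : trace (A1mat a b c d r1 r2 r3 r4 ^ 2) = 2 * c ^ 2 + 2 *
      (((a + b + c) ^ 2 * r1 * r3 - (a - b + c) ^ 2 * r1 * r4 - (a - b - c) ^ 2 * r2 * r3
        + (a + b - c) ^ 2 * r2 * r4 - 4 * a * b * (r1 * r2) - 4 * a * b * (r3 * r4))
        / ((r1 - r2) * (r3 - r4))) := by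
    simp only [sq, trace, diag, mul_apply, Fin.sum_univ_four, A1mat, Fin.isValue, of_apply,
      cons_val', cons_val, cons_val_zero, cons_val_one, cons_val_fin_one, mul_zero, add_zero,
      zero_add, mul_neg, neg_mul, neg_neg]
    field_simp
    ring
  unfold condD
  linear_combination (h - htrace) / 2

theorem stmt_0_general (a b c d : ℂ)
    (A12 A21 : Matrix (Fin 2) (Fin 2) ℂ)
    (A : Matrix (Fin 4) (Fin 4) ℂ)
    (hA : A = blockMat a b A12 A21)
    (hsim : ∃ S : Matrix (Fin 4) (Fin 4) ℂ, IsUnit S ∧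
      S * A * S⁻¹ = Matrix.diagonal ![c, -c, d, -d])
    (vm vc : Fin 4 → ℂ)
    (hvm : Matrix.vecMul vm A = (-c) • vm)
    (hvc : Matrix.vecMul vc A = c • vc)
    (hne : ∀ k : Fin 4, vm k ≠ 0 ∧ vc k ≠ 0)
    (hdet1 : vm 0 * vc 1 - vm 1 * vc 0 ≠ 0)
    (hdet3 : vm 2 * vc 3 - vm 3 * vc 2 ≠ 0) :
    condR (vm 0 / vc 0) (vm 1 / vc 1) (vm 2 / vc 2) (vm 3 / vc 3) ∧
    condD a b c d (vm 0 / vc 0) (vm 1 / vc 1) (vm 2 / vc 2) (vm 3 / vc 3) ∧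
    Matrix.diagonal vc * A * (Matrix.diagonal vc)⁻¹ =
      A1mat a b c d (vm 0 / vc 0) (vm 1 / vc 1) (vm 2 / vc 2) (vm 3 / vc 3) := by
  have hvc0 (k : Fin 4) : vc k ≠ 0 := (hne k).2
  have hr01 : vm 0 / vc 0 ≠ vm 1 / vc 1 := by
    rw [Ne, div_eq_div_iff (hvc0 0) (hvc0 1)]
    exact fun h => hdet1 (by linear_combination h)
  have hr23 : vm 2 / vc 2 ≠ vm 3 / vc 3 := by
    rw [Ne, div_eq_div_iff (hvc0 2) (hvc0 3)]
    exact fun h => hdet3 (by linear_combination h)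
  have hconj : diagonal vc * A * (diagonal vc)⁻¹ =
      A1mat a b c d (vm 0 / vc 0) (vm 1 / vc 1) (vm 2 / vc 2) (vm 3 / vc 3) := by
    have hones : vc / vc = 1 := funext fun k => div_self (hvc0 k)
    have h1 : 1 ᵥ* (diagonal vc * A * (diagonal vc)⁻¹) = c • 1 := by
      rw [← hones, vecMul_div_diagonal_conj hvc0, hvc, smul_div_assoc]
    have hr : (vm / vc) ᵥ* (diagonal vc * A * (diagonal vc)⁻¹) = (-c) • (vm / vc) := by
      rw [vecMul_div_diagonal_conj hvc0, hvm, smul_div_assoc]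
    rw [hA, diagonal_conj_blockMat hvc0] at h1 hr ⊢
    exact blockMat_eq_A1mat (r := vm / vc) hr01 hr23 h1 hr
  refine ⟨⟨?_, hr01, hr23⟩, condD_of_trace_A1mat_sq hr01 hr23 ?_, hconj⟩
  · simp [hne]
  · obtain ⟨S, hS, hSA⟩ := hsim
    have hD : IsUnit (diagonal vc) := isUnit_diagonal.2 (Pi.isUnit_iff.2 fun k => (hvc0 k).isUnit)
    rw [← hconj, trace_conj_pow hD, ← trace_conj_pow hS, hSA]
    simp only [sq, diagonal_mul_diagonal, trace_diagonal, Fin.sum_univ_four, Fin.isValue,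
      cons_val_zero, cons_val_one, cons_val, neg_mul, mul_neg, neg_neg]
    ring

/-- Proposition `prop:expr_a_kai`. -/
theorem stmt_0 (a b c d : ℂ) (hB : condB a b c d)
    (A12 A21 : Matrix (Fin 2) (Fin 2) ℂ)
    (A : Matrix (Fin 4) (Fin 4) ℂ)
    (hA : A = blockMat a b A12 A21)
    (hsim : ∃ S : Matrix (Fin 4) (Fin 4) ℂ, IsUnit S ∧
      S * A * S⁻¹ = Matrix.diagonal ![c, -c, d, -d])
    (vm vc : Fin 4 → ℂ)
    (hvm : Matrix.vecMul vm A = (-c) • vm)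
    (hvc : Matrix.vecMul vc A = c • vc)
    (hne : ∀ k : Fin 4, vm k ≠ 0 ∧ vc k ≠ 0)
    (hdet1 : vm 0 * vc 1 - vm 1 * vc 0 ≠ 0)
    (hdet3 : vm 2 * vc 3 - vm 3 * vc 2 ≠ 0) :
    condR (vm 0 / vc 0) (vm 1 / vc 1) (vm 2 / vc 2) (vm 3 / vc 3) ∧
    condD a b c d (vm 0 / vc 0) (vm 1 / vc 1) (vm 2 / vc 2) (vm 3 / vc 3) ∧
    Matrix.diagonal vc * A * (Matrix.diagonal vc)⁻¹ =
      A1mat a b c d (vm 0 / vc 0) (vm 1 / vc 1) (vm 2 / vc 2) (vm 3 / vc 3) :=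
  stmt_0_general a b c d A12 A21 A hA hsim vm vc hvm hvc hne hdet1 hdet3
end
end

section
/- Assume conditions (B), (R) and (D). Let z be an indeterminate and consider the 2×2 matrices over the field ℂ(z) of rational functions: M_g(z) = z³I₂ − z²·aJ + z·R̃₁₁ + S̃₁₁ and M_h(z) = z³I₂ − z²·aJ + z·R₁₁ − S₁₁. Then there exists a nonzero rational function q(z) ∈ ℂ(z) such that (−1/((z+1)(z²−b²)))·M_g(z) = q(z)·(−(z−1)/((z²−c²)(z²−d²)))·M_h(z) as matrices over ℂ(z) if and only if ε = 0 and δ = 0. (The left-hand matrix is the coefficient matrix of the recursion for the coefficients of the series solution of the Okubo system near x = 1, the right-hand one of that near x = ∞; the existence of such q(z) is exactly the statement that the two first-order systems of difference equations are 'substantially the same', i.e., related by a common scalar gauge factor Γ(z) satisfying a first-order difference equation with rational coefficient.) -/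
set_option maxHeartbeats 1000000
set_option synthInstance.maxHeartbeats 1000000
set_option linter.unusedVariables false

noncomputable section
open Matrix

/-- The constant embedding ℂ → ℂ(z). -/
def CK : ℂ →+* RatFunc ℂ := algebraMap ℂ (RatFunc ℂ)

/-- The coefficient matrix M_g(z) = z³I₂ − z²aJ + zR̃₁₁ + S̃₁₁ over ℂ(z). -/
def Mg (a b c d r1 r2 r3 r4 : ℂ) : Matrix (Fin 2) (Fin 2) (RatFunc ℂ) :=
  ((RatFunc.X : RatFunc ℂ)^3) • (1 : Matrix (Fin 2) (Fin 2) (RatFunc ℂ))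
    - ((RatFunc.X : RatFunc ℂ)^2) • ((a • Jmat).map CK)
    + (RatFunc.X : RatFunc ℂ) • ((Rt11 a b c d r1 r2 r3 r4).map CK)
    + (St11 a b c d r1 r2 r3 r4).map CK

/-- The coefficient matrix M_h(z) = z³I₂ − z²aJ + zR₁₁ − S₁₁ over ℂ(z). -/
def Mh (a b c d r1 r2 r3 r4 : ℂ) : Matrix (Fin 2) (Fin 2) (RatFunc ℂ) :=
  ((RatFunc.X : RatFunc ℂ)^3) • (1 : Matrix (Fin 2) (Fin 2) (RatFunc ℂ))
    - ((RatFunc.X : RatFunc ℂ)^2) • ((a • Jmat).map CK)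
    + (RatFunc.X : RatFunc ℂ) • ((R11 a b c d r1 r2 r3 r4).map CK)
    - (S11 a b c d r1 r2 r3 r4).map CK

section Aux
open Polynomial

lemma phi_inj : Function.Injective (algebraMap ℂ[X] (RatFunc ℂ)) :=
  RatFunc.algebraMap_injective ℂ

lemma map_ne_zero' (p : ℂ[X]) (hp : p ≠ 0) : algebraMap ℂ[X] (RatFunc ℂ) p ≠ 0 := by
  intro h
  exact hp (phi_inj (by simpa using h))

lemma cubic_ne_zero (a2 a1 a0 : ℂ) :
    (X^3 - C a2 * X^2 + C a1 * X + C a0 : ℂ[X]) ≠ 0 := by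
  intro h
  have := congrArg (fun p => Polynomial.coeff p 3) h
  simp [Polynomial.coeff_X_pow, Polynomial.coeff_one] at this

lemma X_add_one_ne_zero : (X + 1 : ℂ[X]) ≠ 0 := by
  intro h
  have := congrArg (fun p => Polynomial.coeff p 1) h
  simp [Polynomial.coeff_one] at this

lemma X_sub_one_ne_zero : (X - 1 : ℂ[X]) ≠ 0 := by
  intro h
  have := congrArg (fun p => Polynomial.coeff p 1) h
  simp [Polynomial.coeff_one] at this

end Aux

/-- the difference systems near x = 1 and x = ∞ are substantially
the same iff ε = 0 and δ = 0. -/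
theorem stmt_1 (a b c d r1 r2 r3 r4 : ℂ)
    (hB : condB a b c d) (hR : condR r1 r2 r3 r4) (hD : condD a b c d r1 r2 r3 r4) :
    (∃ q : RatFunc ℂ, q ≠ 0 ∧
      (-(((RatFunc.X : RatFunc ℂ) + 1) * ((RatFunc.X : RatFunc ℂ)^2 - CK (b^2))))⁻¹ • Mg a b c d r1 r2 r3 r4
        = q • ((-((RatFunc.X : RatFunc ℂ) - 1) / (((RatFunc.X : RatFunc ℂ)^2 - CK (c^2)) * ((RatFunc.X : RatFunc ℂ)^2 - CK (d^2))))
            • Mh a b c d r1 r2 r3 r4)) ↔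
    (epsv a b c d r1 r2 r3 r4 = 0 ∧ deltav a b c d r1 r2 r3 r4 = 0) := by
  obtain ⟨hr0, hr12, hr34⟩ := hR
  have hr1 : r1 ≠ 0 := by
    intro h; exact hr0 (by rw [h]; ring)
  have hb : b ≠ 0 := by simpa using (hB 0).2.1
  have hc : c ≠ 0 := by simpa using (hB 0).2.2.1
  have hden : (r1 - r2) * (r3 - r4) ≠ 0 :=
    mul_ne_zero (sub_ne_zero.2 hr12) (sub_ne_zero.2 hr34)
  set φ : Polynomial ℂ →+* RatFunc ℂ := algebraMap (Polynomial ℂ) (RatFunc ℂ) with hφ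
  -- nonzero scalar factors
  have hcg : (-(((RatFunc.X : RatFunc ℂ) + 1) * ((RatFunc.X : RatFunc ℂ)^2 - CK (b^2)))) ≠ 0 := by
    refine neg_ne_zero.2 (mul_ne_zero ?_ ?_)
    · have : ((RatFunc.X : RatFunc ℂ) + 1) = φ (Polynomial.X + 1) := by
        simp [hφ]
      rw [this]; exact map_ne_zero' _ X_add_one_ne_zero
    · have : ((RatFunc.X : RatFunc ℂ)^2 - CK (b^2)) = φ (Polynomial.X^2 - Polynomial.C (b^2)) := by
        simp [hφ, CK]
      rw [this]; exact map_ne_zero' _ (Polynomial.X_pow_sub_C_ne_zero two_pos _)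
  have hch : ((-((RatFunc.X : RatFunc ℂ) - 1) / (((RatFunc.X : RatFunc ℂ)^2 - CK (c^2)) * ((RatFunc.X : RatFunc ℂ)^2 - CK (d^2))))) ≠ 0 := by
    apply div_ne_zero
    · refine neg_ne_zero.2 ?_
      have : ((RatFunc.X : RatFunc ℂ) - 1) = φ (Polynomial.X - 1) := by simp [hφ]
      rw [this]; exact map_ne_zero' _ X_sub_one_ne_zero
    · refine mul_ne_zero ?_ ?_
      · have : ((RatFunc.X : RatFunc ℂ)^2 - CK (c^2)) = φ (Polynomial.X^2 - Polynomial.C (c^2)) := by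
          simp [hφ, CK]
        rw [this]; exact map_ne_zero' _ (Polynomial.X_pow_sub_C_ne_zero two_pos _)
      · have : ((RatFunc.X : RatFunc ℂ)^2 - CK (d^2)) = φ (Polynomial.X^2 - Polynomial.C (d^2)) := by
          simp [hφ, CK]
        rw [this]; exact map_ne_zero' _ (Polynomial.X_pow_sub_C_ne_zero two_pos _)
  -- abbreviations
  set T : ℂ := (a^2-b^2-c^2-d^2)/2 with hT
  set e : ℂ := epsp a b c d r1 r2 r3 r4 with he
  set dd : ℂ := deltp a b c d r1 r2 r3 r4 with hdd
  set u : ℂ := (A12p a b c d r1 r2 r3 r4 * Jmat * A21p a b c d r1 r2 r3 r4) 0 0 with hu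
  set v : ℂ := (A12p a b c d r1 r2 r3 r4 * Jmat * A21p a b c d r1 r2 r3 r4) 1 1 with hv
  set p10 : ℂ := (A12p a b c d r1 r2 r3 r4 * Jmat * A21p a b c d r1 r2 r3 r4) 1 0 with hp10
  have hJ00 : Jmat 0 0 = 1 := rfl
  have hJ01 : Jmat 0 1 = 0 := rfl
  have hJ10 : Jmat 1 0 = 0 := rfl
  have hJ11 : Jmat 1 1 = -1 := rfl
  -- entry formulas
  have hMg00 : Mg a b c d r1 r2 r3 r4 0 0
      = φ (Polynomial.X^3 - Polynomial.C a * Polynomial.X^2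
          + Polynomial.C (T + b*dd*c) * Polynomial.X + Polynomial.C (a*b^2 - b*u)) := by
    simp [Mg, Rt11, St11, hJ00, hJ01, hJ10, hJ11, CK, hφ, ← he, ← hdd, ← hT, ← hu]
    ring
  have hMg11 : Mg a b c d r1 r2 r3 r4 1 1
      = φ (Polynomial.X^3 + Polynomial.C a * Polynomial.X^2
          + Polynomial.C (T - b*dd*c) * Polynomial.X + Polynomial.C (-(a*b^2) - b*v)) := by
    simp [Mg, Rt11, St11, hJ00, hJ01, hJ10, hJ11, CK, hφ, ← he, ← hdd, ← hT, ← hv]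
    ring
  have hMh00 : Mh a b c d r1 r2 r3 r4 0 0
      = φ (Polynomial.X^3 - Polynomial.C a * Polynomial.X^2
          + Polynomial.C (T - b*dd*c) * Polynomial.X + Polynomial.C (a*b^2 + 2*a*b*c*dd - b*u)) := by
    simp [Mh, R11, S11, hJ00, hJ01, hJ10, hJ11, CK, hφ, ← he, ← hdd, ← hT, ← hu]
    ring
  have hMh11 : Mh a b c d r1 r2 r3 r4 1 1
      = φ (Polynomial.X^3 + Polynomial.C a * Polynomial.X^2
          + Polynomial.C (T + b*dd*c) * Polynomial.X + Polynomial.C (-(a*b^2) + 2*a*b*c*dd - b*v)) := by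
    simp [Mh, R11, S11, hJ00, hJ01, hJ10, hJ11, CK, hφ, ← he, ← hdd, ← hT, ← hv]
    ring
  have hMg10 : Mg a b c d r1 r2 r3 r4 1 0
      = φ (Polynomial.C (-(e*r1) + b*dd*(a-c)) * Polynomial.X + Polynomial.C (-(b*p10))) := by
    simp [Mg, Rt11, St11, hJ00, hJ01, hJ10, hJ11, CK, hφ, ← he, ← hdd, ← hT, ← hp10]
    ring
  have hMh10 : Mh a b c d r1 r2 r3 r4 1 0
      = φ (Polynomial.C (e*r1 - b*dd*(a-c)) * Polynomial.X + Polynomial.C (-(b*p10))) := by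
    simp [Mh, R11, S11, hJ00, hJ01, hJ10, hJ11, CK, hφ, ← he, ← hdd, ← hT, ← hp10]
    ring
  constructor
  · -- forward direction
    rintro ⟨q, hq, H⟩
    set ch : RatFunc ℂ := (-((RatFunc.X : RatFunc ℂ) - 1) / (((RatFunc.X : RatFunc ℂ)^2 - CK (c^2)) * ((RatFunc.X : RatFunc ℂ)^2 - CK (d^2)))) with hchd
    set cg : RatFunc ℂ := (-(((RatFunc.X : RatFunc ℂ) + 1) * ((RatFunc.X : RatFunc ℂ)^2 - CK (b^2)))) with hcgd
    set Q : RatFunc ℂ := cg * (q * ch) with hQdef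
    have HQ : Mg a b c d r1 r2 r3 r4 = Q • Mh a b c d r1 r2 r3 r4 := by
      have := congrArg (fun M => cg • M) H
      simpa [smul_smul, mul_inv_cancel₀ hcg, hQdef] using this
    have h00 : Mg a b c d r1 r2 r3 r4 0 0 = Q * Mh a b c d r1 r2 r3 r4 0 0 := by
      rw [HQ]; simp
    have h11 : Mg a b c d r1 r2 r3 r4 1 1 = Q * Mh a b c d r1 r2 r3 r4 1 1 := by
      rw [HQ]; simp
    have hcross : Mg a b c d r1 r2 r3 r4 0 0 * Mh a b c d r1 r2 r3 r4 1 1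
        = Mg a b c d r1 r2 r3 r4 1 1 * Mh a b c d r1 r2 r3 r4 0 0 := by
      rw [h00, h11]; ring
    rw [hMg00, hMg11, hMh00, hMh11, ← _root_.map_mul φ, ← _root_.map_mul φ] at hcross
    have hP := phi_inj hcross
    have ev : ∀ t : ℂ,
        (t^3 - a * t^2 + (T + b*dd*c) * t + (a*b^2 - b*u))
          * (t^3 + a * t^2 + (T + b*dd*c) * t + (-(a*b^2) + 2*a*b*c*dd - b*v))
        = (t^3 + a * t^2 + (T - b*dd*c) * t + (-(a*b^2) - b*v))
          * (t^3 - a * t^2 + (T - b*dd*c) * t + (a*b^2 + 2*a*b*c*dd - b*u)) := by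
      intro t
      have := congrArg (Polynomial.eval t) hP
      simpa using this
    have e0 := ev 0
    have e1 := ev 1
    have e2 := ev 2
    have e3 := ev 3
    have em1 := ev (-1)
    have em2 := ev (-2)
    have em3 := ev (-3)
    have hbcd : b * c * dd = 0 := by
      linear_combination (-(1:ℂ)/576)*e3 + ((1:ℂ)/48)*e2 + (-(13:ℂ)/192)*e1 + ((7:ℂ)/72)*e0
        + (-(13:ℂ)/192)*em1 + ((1:ℂ)/48)*em2 + (-(1:ℂ)/576)*em3
    have hdd0 : dd = 0 :=
      (mul_eq_zero.mp hbcd).resolve_left (mul_ne_zero hb hc)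
    have hdelta : deltav a b c d r1 r2 r3 r4 = 0 := by
      rw [hdd, deltp] at hdd0
      rw [div_eq_zero_iff] at hdd0
      rcases hdd0 with h | h
      · exact (mul_eq_zero.mp h).resolve_left two_ne_zero
      · exact absurd h hden
    -- now Q = 1
    have hgh00 : Mg a b c d r1 r2 r3 r4 0 0 = Mh a b c d r1 r2 r3 r4 0 0 := by
      rw [hMg00, hMh00, hdd0]
      norm_num
    have hMh00ne : Mh a b c d r1 r2 r3 r4 0 0 ≠ 0 := by
      rw [hMh00]
      exact map_ne_zero' _ (cubic_ne_zero _ _ _)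
    have hQ1 : Q = 1 := by
      have : Q * Mh a b c d r1 r2 r3 r4 0 0 = 1 * Mh a b c d r1 r2 r3 r4 0 0 := by
        rw [one_mul, ← h00, hgh00]
      exact mul_right_cancel₀ hMh00ne this
    have h10 : Mg a b c d r1 r2 r3 r4 1 0 = Mh a b c d r1 r2 r3 r4 1 0 := by
      have : Mg a b c d r1 r2 r3 r4 1 0 = Q * Mh a b c d r1 r2 r3 r4 1 0 := by
        rw [HQ]; simp
      rw [this, hQ1, one_mul]
    rw [hMg10, hMh10, hdd0] at h10
    have hpoly10 := phi_inj h10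
    have heval := congrArg (Polynomial.eval (1:ℂ)) hpoly10
    simp at heval
    have her1 : e * r1 = 0 := by linear_combination (-(1:ℂ)/2) * heval
    have he0 : e = 0 := by
      rcases mul_eq_zero.mp her1 with h | h
      · exact h
      · exact absurd h hr1
    have heps : epsv a b c d r1 r2 r3 r4 = 0 := by
      rw [he, epsp] at he0
      rw [div_eq_zero_iff] at he0
      rcases he0 with h | h
      · exact (mul_eq_zero.mp h).resolve_left two_ne_zero
      · exact absurd h hden
    exact ⟨heps, hdelta⟩
  · -- backward direction
    rintro ⟨heps, hdelta⟩
    have he0 : e = 0 := by rw [he, epsp, heps]; simp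
    have hdd0 : dd = 0 := by rw [hdd, deltp, hdelta]; simp
    have hE00 : Mg a b c d r1 r2 r3 r4 0 0 = Mh a b c d r1 r2 r3 r4 0 0 := by
      rw [hMg00, hMh00, hdd0]; norm_num
    have hE10 : Mg a b c d r1 r2 r3 r4 1 0 = Mh a b c d r1 r2 r3 r4 1 0 := by
      rw [hMg10, hMh10, he0, hdd0]; norm_num
    have hE11 : Mg a b c d r1 r2 r3 r4 1 1 = Mh a b c d r1 r2 r3 r4 1 1 := by
      rw [hMg11, hMh11, hdd0]; norm_num
    have hE01 : Mg a b c d r1 r2 r3 r4 0 1 = Mh a b c d r1 r2 r3 r4 0 1 := by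
      have hMg01 : Mg a b c d r1 r2 r3 r4 0 1
          = φ (Polynomial.C (-(e*r2) + b*dd*(a+c)) * Polynomial.X
              + Polynomial.C (-(b * ((A12p a b c d r1 r2 r3 r4 * Jmat * A21p a b c d r1 r2 r3 r4) 0 1)))) := by
        simp [Mg, Rt11, St11, hJ00, hJ01, hJ10, hJ11, CK, hφ, ← he, ← hdd, ← hT]
        ring
      have hMh01 : Mh a b c d r1 r2 r3 r4 0 1
          = φ (Polynomial.C (e*r2 - b*dd*(a+c)) * Polynomial.X
              + Polynomial.C (-(b * ((A12p a b c d r1 r2 r3 r4 * Jmat * A21p a b c d r1 r2 r3 r4) 0 1)))) := by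
        simp [Mh, R11, S11, hJ00, hJ01, hJ10, hJ11, CK, hφ, ← he, ← hdd, ← hT]
        ring
      rw [hMg01, hMh01, he0, hdd0]
      norm_num
    have hMgh : Mg a b c d r1 r2 r3 r4 = Mh a b c d r1 r2 r3 r4 := by
      ext i j
      fin_cases i <;> fin_cases j
      · exact hE00
      · exact hE01
      · exact hE10
      · exact hE11
    refine ⟨(-(((RatFunc.X : RatFunc ℂ) + 1) * ((RatFunc.X : RatFunc ℂ)^2 - CK (b^2))))⁻¹
      * (-((RatFunc.X : RatFunc ℂ) - 1) / (((RatFunc.X : RatFunc ℂ)^2 - CK (c^2)) * ((RatFunc.X : RatFunc ℂ)^2 - CK (d^2))))⁻¹,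
      mul_ne_zero (inv_ne_zero hcg) (inv_ne_zero hch), ?_⟩
    rw [hMgh, smul_smul]
    congr 1
    rw [mul_assoc, inv_mul_cancel₀ hch, mul_one]
end
end

section
/- Assume conditions (B), (R) and (D) for complex numbers a, b, c, d, r₁, r₂, r₃, r₄. Then ε = 0 and δ = 0 hold if and only if at least one of the following two families of relations holds: (family a) ((a+b+c)²−d²)((a−b−c)²−d²) ≠ 0 and r₁ = (((a+b−c)²−d²)/((a+b+c)²−d²))·r₄, r₂ = (((a−b+c)²−d²)/((a−b−c)²−d²))·r₄, r₃ = ((((a+b−c)²−d²)((a−b+c)²−d²))/(((a+b+c)²−d²)((a−b−c)²−d²)))·r₄; or (family b) ((a+b−c)²−d²)((a−b+c)²−d²) ≠ 0 and r₁ = (((a−b−c)²−d²)/((a−b+c)²−d²))·r₃, r₂ = (((a+b+c)²−d²)/((a+b−c)²−d²))·r₃, r₄ = ((((a+b+c)²−d²)((a−b−c)²−d²))/(((a+b−c)²−d²)((a−b+c)²−d²)))·r₃. -/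
set_option maxHeartbeats 1000000
set_option synthInstance.maxHeartbeats 1000000
set_option linter.unusedVariables false

noncomputable section
open Matrix

/-- ε = δ = 0 iff the parameters r₁, r₂, r₃, r₄ satisfy one of the
two families of relations. -/
theorem stmt_2 (a b c d r1 r2 r3 r4 : ℂ)
    (hB : condB a b c d) (hR : condR r1 r2 r3 r4) (hD : condD a b c d r1 r2 r3 r4) :
    (epsv a b c d r1 r2 r3 r4 = 0 ∧ deltav a b c d r1 r2 r3 r4 = 0) ↔
    ((((a+b+c)^2-d^2) * ((a-b-c)^2-d^2) ≠ 0 ∧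
        r1 = (((a+b-c)^2-d^2)/((a+b+c)^2-d^2)) * r4 ∧
        r2 = (((a-b+c)^2-d^2)/((a-b-c)^2-d^2)) * r4 ∧
        r3 = ((((a+b-c)^2-d^2)*((a-b+c)^2-d^2))/(((a+b+c)^2-d^2)*((a-b-c)^2-d^2))) * r4) ∨
     (((a+b-c)^2-d^2) * ((a-b+c)^2-d^2) ≠ 0 ∧
        r1 = (((a-b-c)^2-d^2)/((a-b+c)^2-d^2)) * r3 ∧
        r2 = (((a+b+c)^2-d^2)/((a+b-c)^2-d^2)) * r3 ∧
        r4 = ((((a+b+c)^2-d^2)*((a-b-c)^2-d^2))/(((a+b-c)^2-d^2)*((a-b+c)^2-d^2))) * r3)) := by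
  obtain ⟨hprod, h12, h34⟩ := hR
  have hr1 : r1 ≠ 0 := fun h => hprod (by rw [h]; ring)
  have hr2 : r2 ≠ 0 := fun h => hprod (by rw [h]; ring)
  have hr3 : r3 ≠ 0 := fun h => hprod (by rw [h]; ring)
  have hr4 : r4 ≠ 0 := fun h => hprod (by rw [h]; ring)
  have h12' : r1 - r2 ≠ 0 := sub_ne_zero.mpr h12
  have h34' : r3 - r4 ≠ 0 := sub_ne_zero.mpr h34
  have hB0 := hB 0
  push_cast at hB0
  obtain ⟨ha, hb, hc, hd, _, _, _, _, hab, hab', hac, hac', _, _, hbc, hbc', _⟩ := hB0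
  constructor
  · rintro ⟨heps0, hdel0⟩
    have heps : b*(a+c)*r1 + b*(a-c)*r2 - a*(b+c)*r3 - a*(b-c)*r4 = 0 := heps0
    have hdel : r1*r2 - r3*r4 = 0 := hdel0
    have hD' : (a+b+c)^2*r1*r3 - (a-b+c)^2*r1*r4 - (a-b-c)^2*r2*r3 + (a+b-c)^2*r2*r4
        - 4*a*b*(r1*r2) - 4*a*b*(r3*r4) = d^2 * ((r1-r2)*(r3-r4)) := by
      have := hD
      unfold condD at this
      rwa [div_eq_iff (mul_ne_zero h12' h34')] at this
    have hE : ((a+b+c)^2-d^2)*(r1*r3) - ((a-b+c)^2-d^2)*(r1*r4)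
        - ((a-b-c)^2-d^2)*(r2*r3) + ((a+b-c)^2-d^2)*(r2*r4) - 8*a*b*(r1*r2) = 0 := by
      linear_combination hD' - 4*a*b*hdel
    have hT1 : ((a+b+c)^2-d^2)*r1 - ((a+b-c)^2-d^2)*r4 = 0 := by
      have key : (r1-r2)*((r3-r4)*(((a+b+c)^2-d^2)*r1 - ((a+b-c)^2-d^2)*r4)) = 0 := by
        linear_combination ((-4)*r3*r4) * heps + ((-4)*r1*r4) * heps + (8*r1*r2) * heps +
          (8*b*c*r2) * hdel + ((-8)*b*c*r1) * hdel + ((-4)*a*c*r4) * hdel +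
          (4*a*c*r3) * hdel + (4*a*b*r4) * hdel + (4*a*b*r3) * hdel + ((-8)*a*b*r2) * hdel +
          ((-1)*r4) * hE + (1*r1) * hE
      rcases mul_eq_zero.mp key with h | h
      · exact absurd h h12'
      rcases mul_eq_zero.mp h with h | h
      · exact absurd h h34'
      · exact h
    have hT2 : ((a-b-c)^2-d^2)*r2 - ((a-b+c)^2-d^2)*r4 = 0 := by
      have key : (r1-r2)*((r3-r4)*(((a-b-c)^2-d^2)*r2 - ((a-b+c)^2-d^2)*r4)) = 0 := by
        linear_combination (4*r3*r4) * heps + ((-4)*r2*r4) * heps + (4*a*c*r4) * hdel +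
          ((-4)*a*c*r3) * hdel + ((-4)*a*b*r4) * hdel + ((-4)*a*b*r3) * hdel +
          (8*a*b*r2) * hdel + ((-1)*r4) * hE + (1*r2) * hE
      rcases mul_eq_zero.mp key with h | h
      · exact absurd h h12'
      rcases mul_eq_zero.mp h with h | h
      · exact absurd h h34'
      · exact h
    have hTH : ((a+b+c)^2-d^2)*((a-b-c)^2-d^2)*r3
        - ((a+b-c)^2-d^2)*((a-b+c)^2-d^2)*r4 = 0 := by
      have key : (r1-r2)*((r3-r4)*(((a+b+c)^2-d^2)*((a-b-c)^2-d^2)*r3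
          - ((a+b-c)^2-d^2)*((a-b+c)^2-d^2)*r4)) = 0 := by
        linear_combination (4*d^2*r2*r4) * heps + ((-4)*d^2*r2*r3) * heps +
          ((-4)*c^2*r2*r4) * heps + (4*c^2*r2*r3) * heps + ((-16)*b*c*r3*r4) * heps +
          (8*b*c*r2*r4) * heps + (8*b*c*r2*r3) * heps + ((-4)*b^2*r2*r4) * heps +
          (4*b^2*r2*r3) * heps + (8*a*c*r2*r4) * heps + ((-8)*a*c*r2*r3) * heps +
          (16*a*b*r3*r4) * heps + ((-8)*a*b*r2*r4) * heps + ((-8)*a*b*r2*r3) * heps +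
          ((-4)*a^2*r2*r4) * heps + (4*a^2*r2*r3) * heps + ((-16)*a*b*c^2*r4) * hdel +
          (16*a*b*c^2*r3) * hdel + (16*a*b^2*c*r4) * hdel + (16*a*b^2*c*r3) * hdel +
          ((-32)*a*b^2*c*r2) * hdel + (16*a^2*b*c*r4) * hdel + ((-16)*a^2*b*c*r3) * hdel +
          ((-16)*a^2*b^2*r4) * hdel + ((-16)*a^2*b^2*r3) * hdel + (32*a^2*b^2*r2) * hdel +
          (1*d^2*r4) * hE + ((-1)*d^2*r3) * hE + ((-1)*c^2*r4) * hE + (1*c^2*r3) * hE +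
          (2*b*c*r4) * hE + (2*b*c*r3) * hE + ((-4)*b*c*r2) * hE + ((-1)*b^2*r4) * hE +
          (1*b^2*r3) * hE + (2*a*c*r4) * hE + ((-2)*a*c*r3) * hE + ((-2)*a*b*r4) * hE +
          ((-2)*a*b*r3) * hE + (4*a*b*r2) * hE + ((-1)*a^2*r4) * hE + (1*a^2*r3) * hE
      rcases mul_eq_zero.mp key with h | h
      · exact absurd h h12'
      rcases mul_eq_zero.mp h with h | h
      · exact absurd h h34'
      · exact h
    have hu : (a+b+c)^2-d^2 ≠ 0 := by
      intro hu0
      have hw0 : (a+b-c)^2-d^2 = 0 := by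
        have : ((a+b-c)^2-d^2)*r4 = 0 := by linear_combination r1*hu0 - hT1
        rcases mul_eq_zero.mp this with h | h
        · exact h
        · exact absurd h hr4
      have : (4:ℂ)*((a+b)*c) = 0 := by linear_combination hu0 - hw0
      have h4 : (4:ℂ) ≠ 0 := by norm_num
      exact (mul_ne_zero h4 (mul_ne_zero hab hc)) this
    have hv : (a-b-c)^2-d^2 ≠ 0 := by
      intro hv0
      have hx0 : (a-b+c)^2-d^2 = 0 := by
        have : ((a-b+c)^2-d^2)*r4 = 0 := by linear_combination r2*hv0 - hT2
        rcases mul_eq_zero.mp this with h | h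
        · exact h
        · exact absurd h hr4
      have : (-4:ℂ)*((a-b)*c) = 0 := by linear_combination hv0 - hx0
      have h4 : (-4:ℂ) ≠ 0 := by norm_num
      exact (mul_ne_zero h4 (mul_ne_zero hab' hc)) this
    left
    refine ⟨mul_ne_zero hu hv, ?_, ?_, ?_⟩
    · field_simp
      linear_combination hT1
    · field_simp
      linear_combination hT2
    · field_simp
      linear_combination hTH
  · rintro (⟨huv, h1, h2, h3⟩ | ⟨hwx, h1, h2, h4⟩)
    · have hu : (a+b+c)^2-d^2 ≠ 0 := fun h => huv (by rw [h]; ring)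
      have hv : (a-b-c)^2-d^2 ≠ 0 := fun h => huv (by rw [h]; ring)
      constructor
      · show b*(a+c)*r1 + b*(a-c)*r2 - a*(b+c)*r3 - a*(b-c)*r4 = 0
        rw [h1, h2, h3]
        field_simp
        ring
      · show r1*r2 - r3*r4 = 0
        rw [h1, h2, h3]
        field_simp
        ring
    · have hw : (a+b-c)^2-d^2 ≠ 0 := fun h => hwx (by rw [h]; ring)
      have hx : (a-b+c)^2-d^2 ≠ 0 := fun h => hwx (by rw [h]; ring)
      constructor
      · show b*(a+c)*r1 + b*(a-c)*r2 - a*(b+c)*r3 - a*(b-c)*r4 = 0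
        rw [h1, h2, h4]
        field_simp
        ring
      · show r1*r2 - r3*r4 = 0
        rw [h1, h2, h4]
        field_simp
        ring
end
end

section
/- Let a, b, c, d, r₁, r₂, r₃, r₄ be complex numbers satisfying condition (R). If ((a+b+c)²−d²)((a−b−c)²−d²) ≠ 0 and r₁ = (((a+b−c)²−d²)/((a+b+c)²−d²))·r₄, r₂ = (((a−b+c)²−d²)/((a−b−c)²−d²))·r₄, r₃ = ((((a+b−c)²−d²)((a−b+c)²−d²))/(((a+b+c)²−d²)((a−b−c)²−d²)))·r₄, or if ((a+b−c)²−d²)((a−b+c)²−d²) ≠ 0 and r₁ = (((a−b−c)²−d²)/((a−b+c)²−d²))·r₃, r₂ = (((a+b+c)²−d²)/((a+b−c)²−d²))·r₃, r₄ = ((((a+b+c)²−d²)((a−b−c)²−d²))/(((a+b−c)²−d²)((a−b+c)²−d²)))·r₃, then (assuming a ≠ 0 and b ≠ 0) the matrix A₁ equals A₁*. -/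
set_option maxHeartbeats 1000000
set_option synthInstance.maxHeartbeats 1000000
set_option linter.unusedVariables false

noncomputable section
open Matrix

/-- substituting either family of relations into A₁ yields A₁*. -/
theorem stmt_3 (a b c d r1 r2 r3 r4 : ℂ)
    (hR : condR r1 r2 r3 r4) (ha : a ≠ 0) (hb : b ≠ 0)
    (h : (((a+b+c)^2-d^2) * ((a-b-c)^2-d^2) ≠ 0 ∧
        r1 = (((a+b-c)^2-d^2)/((a+b+c)^2-d^2)) * r4 ∧
        r2 = (((a-b+c)^2-d^2)/((a-b-c)^2-d^2)) * r4 ∧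
        r3 = ((((a+b-c)^2-d^2)*((a-b+c)^2-d^2))/(((a+b+c)^2-d^2)*((a-b-c)^2-d^2))) * r4) ∨
       (((a+b-c)^2-d^2) * ((a-b+c)^2-d^2) ≠ 0 ∧
        r1 = (((a-b-c)^2-d^2)/((a-b+c)^2-d^2)) * r3 ∧
        r2 = (((a+b+c)^2-d^2)/((a+b-c)^2-d^2)) * r3 ∧
        r4 = ((((a+b+c)^2-d^2)*((a-b-c)^2-d^2))/(((a+b-c)^2-d^2)*((a-b+c)^2-d^2))) * r3)) :
    A1mat a b c d r1 r2 r3 r4 = A1star a b c d := by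
  obtain ⟨hr0, h12, h34⟩ := hR
  have hr3 : r3 ≠ 0 := fun h => hr0 (by rw [h]; ring)
  have hr4 : r4 ≠ 0 := fun h => hr0 (by rw [h]; ring)
  have h12' : r1 - r2 ≠ 0 := sub_ne_zero.mpr h12
  have h34' : r3 - r4 ≠ 0 := sub_ne_zero.mpr h34
  have h21' : r2 - r1 ≠ 0 := sub_ne_zero.mpr (Ne.symm h12)
  have h43' : r4 - r3 ≠ 0 := sub_ne_zero.mpr (Ne.symm h34)
  have h4a : (4:ℂ)*a ≠ 0 := by simp [ha]
  have h4b : (4:ℂ)*b ≠ 0 := by simp [hb]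
  rcases h with ⟨hPQ, e1, e2, e3⟩ | ⟨hPQ, e1, e2, e3⟩ <;>
  [ (have hP : ((a+b+c)^2-d^2) ≠ 0 := left_ne_zero_of_mul hPQ;
     have hQ : ((a-b-c)^2-d^2) ≠ 0 := right_ne_zero_of_mul hPQ;
     have key : ∀ x y : ℂ, x * (((a+b+c)^2-d^2) * ((a-b-c)^2-d^2)) = y * (((a+b+c)^2-d^2) * ((a-b-c)^2-d^2)) → x = y :=
       fun x y hxy => mul_right_cancel₀ hPQ hxy);
    (have hP : ((a+b-c)^2-d^2) ≠ 0 := left_ne_zero_of_mul hPQ;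
     have hQ : ((a-b+c)^2-d^2) ≠ 0 := right_ne_zero_of_mul hPQ;
     have key : ∀ x y : ℂ, x * (((a+b-c)^2-d^2) * ((a-b+c)^2-d^2)) = y * (((a+b-c)^2-d^2) * ((a-b+c)^2-d^2)) → x = y :=
       fun x y hxy => mul_right_cancel₀ hPQ hxy)] <;>
  · ext i j
    fin_cases i <;> fin_cases j <;>
      simp only [A1mat, A1star, Matrix.cons_val', Matrix.cons_val_zero,
        Matrix.cons_val_one, Matrix.head_cons, Matrix.empty_val',
        Matrix.cons_val_fin_one, Matrix.head_fin_const, Matrix.of_apply,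
        Matrix.cons_val_succ, Fin.mk_zero, Fin.mk_one,
        show ((⟨2,by norm_num⟩ : Fin 4) = Fin.succ (Fin.succ 0)) from rfl,
        show ((⟨3,by norm_num⟩ : Fin 4) = Fin.succ (Fin.succ (Fin.succ 0))) from rfl] <;>
      first
      | rfl
      | (rw [div_eq_div_iff (by assumption) (by assumption)]
         apply key
         simp only [e1, e2, e3]
         field_simp
         ring)
end
end

section
/- Assume conditions (B), (R) and (D) for complex numbers a, b, c, d, r₁, r₂, r₃, r₄, and let M_g(z) = z³I₂ − z²·aJ + z·R̃₁₁ + S̃₁₁ and M_h(z) = z³I₂ − z²·aJ + z·R₁₁ − S₁₁, viewed as 2×2 matrices over ℂ(z). Then there exists a nonzero rational function q(z) ∈ ℂ(z) such that (−1/((z+1)(z²−b²)))·M_g(z) = q(z)·(−(z−1)/((z²−c²)(z²−d²)))·M_h(z) (i.e., the systems of difference equations for the coefficients of the local series solutions near x = 1 and near x = ∞ are substantially the same) if and only if A₁ = A₁*. -/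
set_option maxHeartbeats 1000000
set_option synthInstance.maxHeartbeats 1000000
set_option linter.unusedVariables false

noncomputable section
open Matrix

section Aux

lemma ext5 (c0 c1 c2 c3 c4 : ℂ)
    (h : CK c0 + CK c1 * RatFunc.X + CK c2 * RatFunc.X^2 + CK c3 * RatFunc.X^3
        + CK c4 * RatFunc.X^4 = 0) :
    c0 = 0 ∧ c1 = 0 ∧ c2 = 0 ∧ c3 = 0 ∧ c4 = 0 := by
  have hp : (Polynomial.C c0 + Polynomial.C c1 * Polynomial.X
      + Polynomial.C c2 * Polynomial.X^2 + Polynomial.C c3 * Polynomial.X^3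
      + Polynomial.C c4 * Polynomial.X^4) = 0 := by
    apply RatFunc.algebraMap_injective ℂ
    rw [map_zero, map_add, map_add, map_add, map_add, _root_.map_mul, _root_.map_mul,
      _root_.map_mul, _root_.map_mul, map_pow, map_pow, map_pow, RatFunc.algebraMap_X]
    simpa [CK] using h
  have h0 := congrArg (fun p => Polynomial.coeff p 0) hp
  have h1 := congrArg (fun p => Polynomial.coeff p 1) hp
  have h2 := congrArg (fun p => Polynomial.coeff p 2) hp
  have h3 := congrArg (fun p => Polynomial.coeff p 3) hp
  have h4 := congrArg (fun p => Polynomial.coeff p 4) hp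
  simp [Polynomial.coeff_add, Polynomial.coeff_C, Polynomial.coeff_C_mul,
    Polynomial.coeff_X_pow, Polynomial.coeff_X] at h0 h1 h2 h3 h4
  exact ⟨h0, h1, h2, h3, h4⟩

lemma CK_injective : Function.Injective CK := RingHom.injective CK

lemma CK_eq_zero {x : ℂ} (h : CK x = 0) : x = 0 := CK_injective (by rw [h, map_zero])

lemma CK_ne_zero {x : ℂ} (h : x ≠ 0) : CK x ≠ 0 := fun hc => h (CK_eq_zero hc)

lemma nzX1 : (RatFunc.X + 1 : RatFunc ℂ) ≠ 0 := by
  intro h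
  have h' : CK 1 + CK 1 * RatFunc.X + CK 0 * RatFunc.X^2 + CK 0 * RatFunc.X^3
      + CK 0 * RatFunc.X^4 = 0 := by
    rw [_root_.map_one, map_zero]; linear_combination h
  exact one_ne_zero (ext5 1 1 0 0 0 h').1

lemma nzXm1 : (RatFunc.X - 1 : RatFunc ℂ) ≠ 0 := by
  intro h
  have h' : CK (-1) + CK 1 * RatFunc.X + CK 0 * RatFunc.X^2 + CK 0 * RatFunc.X^3
      + CK 0 * RatFunc.X^4 = 0 := by
    rw [_root_.map_one, map_zero, map_neg, _root_.map_one]; linear_combination h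
  exact one_ne_zero (ext5 (-1) 1 0 0 0 h').2.1

lemma nzXc (e : ℂ) : (RatFunc.X - CK e : RatFunc ℂ) ≠ 0 := by
  intro h
  have h' : CK (-e) + CK 1 * RatFunc.X + CK 0 * RatFunc.X^2 + CK 0 * RatFunc.X^3
      + CK 0 * RatFunc.X^4 = 0 := by
    rw [_root_.map_one, map_zero, map_neg]; linear_combination h
  exact one_ne_zero (ext5 (-e) 1 0 0 0 h').2.1

lemma nzX2 (e : ℂ) : (RatFunc.X^2 - CK e : RatFunc ℂ) ≠ 0 := by
  intro h
  have h' : CK (-e) + CK 0 * RatFunc.X + CK 1 * RatFunc.X^2 + CK 0 * RatFunc.X^3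
      + CK 0 * RatFunc.X^4 = 0 := by
    rw [_root_.map_one, map_zero, map_neg]; linear_combination h
  exact one_ne_zero (ext5 (-e) 0 1 0 0 h').2.2.1

lemma two_nz : (2 : RatFunc ℂ) ≠ 0 := by
  intro h0
  exact two_ne_zero (α := ℂ) (CK_eq_zero (by rw [map_ofNat]; exact h0))

end Aux


lemma MgeqMh (a b c d r1 r2 r3 r4 : ℂ) (he : epsp a b c d r1 r2 r3 r4 = 0)
    (hd : deltp a b c d r1 r2 r3 r4 = 0) :
    Mg a b c d r1 r2 r3 r4 = Mh a b c d r1 r2 r3 r4 := by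
  have h1 : Rt11 a b c d r1 r2 r3 r4 = R11 a b c d r1 r2 r3 r4 := by
    rw [Rt11, R11, he, hd]; simp
  have h2 : St11 a b c d r1 r2 r3 r4 = -S11 a b c d r1 r2 r3 r4 := by
    ext i j
    simp [St11, S11, hd, Matrix.sub_apply, Matrix.add_apply, Matrix.smul_apply,
      Matrix.neg_apply, smul_eq_mul]
  rw [Mg, Mh, h1, h2]
  have h3 : ((-S11 a b c d r1 r2 r3 r4).map CK) = -((S11 a b c d r1 r2 r3 r4).map CK) := by
    ext i j; simp [Matrix.map_apply]
  rw [h3]; abel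

example (a b c d r1 r2 r3 r4 : ℂ) (q' : RatFunc ℂ)
    (hM : Mg a b c d r1 r2 r3 r4 = q' • Mh a b c d r1 r2 r3 r4) : True := by
  have e00 := congrFun (congrFun hM 0) 0
  have e01 := congrFun (congrFun hM 0) 1
  simp [Mg, Mh, Jmat, Matrix.add_apply, Matrix.sub_apply, Matrix.smul_apply,
    Matrix.map_apply, Matrix.one_apply, smul_eq_mul] at e00 e01
  trivial

lemma Wfwd (a b c d r1 r2 r3 r4 : ℂ) (ha : a ≠ 0) (hb : b ≠ 0) (hc : c ≠ 0)
    (hr2 : r2 ≠ 0) (q' : RatFunc ℂ)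
    (hM : Mg a b c d r1 r2 r3 r4 = q' • Mh a b c d r1 r2 r3 r4) :
    epsp a b c d r1 r2 r3 r4 = 0 ∧ deltp a b c d r1 r2 r3 r4 = 0 := by
  have e00 := congrFun (congrFun hM 0) 0
  have e01 := congrFun (congrFun hM 0) 1
  have e11 := congrFun (congrFun hM 1) 1
  simp [Mg, Mh, Jmat, Matrix.add_apply, Matrix.sub_apply, Matrix.smul_apply,
    Matrix.map_apply, Matrix.one_apply, smul_eq_mul] at e00 e01 e11
  -- entry values of R11 and Rt11
  have hvR00 : R11 a b c d r1 r2 r3 r4 0 0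
      = (a^2-b^2-c^2-d^2)/2 - b * deltp a b c d r1 r2 r3 r4 * c := by
    simp [R11, Matrix.add_apply, Matrix.sub_apply, Matrix.smul_apply, Matrix.one_apply,
      smul_eq_mul]
    try ring
  have hvR01 : R11 a b c d r1 r2 r3 r4 0 1
      = epsp a b c d r1 r2 r3 r4 * r2 - b * deltp a b c d r1 r2 r3 r4 * (a+c) := by
    simp [R11, Matrix.add_apply, Matrix.sub_apply, Matrix.smul_apply, Matrix.one_apply,
      smul_eq_mul]
    try ring
  have hvR11 : R11 a b c d r1 r2 r3 r4 1 1
      = (a^2-b^2-c^2-d^2)/2 + b * deltp a b c d r1 r2 r3 r4 * c := by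
    simp [R11, Matrix.add_apply, Matrix.sub_apply, Matrix.smul_apply, Matrix.one_apply,
      smul_eq_mul]
    try ring
  have hvRt00 : Rt11 a b c d r1 r2 r3 r4 0 0
      = (a^2-b^2-c^2-d^2)/2 + b * deltp a b c d r1 r2 r3 r4 * c := by
    simp [Rt11, Matrix.add_apply, Matrix.sub_apply, Matrix.smul_apply, Matrix.one_apply,
      smul_eq_mul]
    try ring
  have hvRt01 : Rt11 a b c d r1 r2 r3 r4 0 1
      = -(epsp a b c d r1 r2 r3 r4 * r2) + b * deltp a b c d r1 r2 r3 r4 * (a+c) := by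
    simp [Rt11, Matrix.add_apply, Matrix.sub_apply, Matrix.smul_apply, Matrix.one_apply,
      smul_eq_mul]
    try ring
  have hvRt11 : Rt11 a b c d r1 r2 r3 r4 1 1
      = (a^2-b^2-c^2-d^2)/2 - b * deltp a b c d r1 r2 r3 r4 * c := by
    simp [Rt11, Matrix.add_apply, Matrix.sub_apply, Matrix.smul_apply, Matrix.one_apply,
      smul_eq_mul]
    try ring
  -- S/St relation
  have hTS : St11 a b c d r1 r2 r3 r4 + S11 a b c d r1 r2 r3 r4
      = (-(2*a*b*c*deltp a b c d r1 r2 r3 r4)) • (1 : Matrix (Fin 2) (Fin 2) ℂ) := by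
    ext i j
    fin_cases i <;> fin_cases j <;>
      simp [St11, S11, Matrix.add_apply, Matrix.sub_apply, Matrix.smul_apply,
        Matrix.one_apply, smul_eq_mul] <;> try ring
  have hTS00 := congrFun (congrFun hTS 0) 0
  have hTS01 := congrFun (congrFun hTS 0) 1
  have hTS11 := congrFun (congrFun hTS 1) 1
  simp [Matrix.add_apply, Matrix.smul_apply, Matrix.one_apply, smul_eq_mul] at hTS00 hTS01 hTS11
  have hvSt00 : St11 a b c d r1 r2 r3 r4 0 0
      = -(2*a*b*c*deltp a b c d r1 r2 r3 r4) - S11 a b c d r1 r2 r3 r4 0 0 := by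
    linear_combination hTS00
  have hvSt01 : St11 a b c d r1 r2 r3 r4 0 1 = - S11 a b c d r1 r2 r3 r4 0 1 := by
    linear_combination hTS01
  have hvSt11 : St11 a b c d r1 r2 r3 r4 1 1
      = -(2*a*b*c*deltp a b c d r1 r2 r3 r4) - S11 a b c d r1 r2 r3 r4 1 1 := by
    linear_combination hTS11
  rw [hvR00, hvRt00, hvSt00] at e00
  rw [hvR01, hvRt01, hvSt01] at e01
  rw [hvR11, hvRt11, hvSt11] at e11
  simp only [map_add, map_sub, map_neg, _root_.map_mul, map_ofNat] at e00 e01 e11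
  by_cases hq1 : q' = 1
  · subst hq1
    rw [one_mul] at e00 e01
    -- from e00 : 2*(CK b * CK dlt * CK c)*(X - CK a) = 0
    have k1 : (2 : RatFunc ℂ) * (CK b * CK (deltp a b c d r1 r2 r3 r4) * CK c)
        * (RatFunc.X - CK a) = 0 := by
      linear_combination e00
    have k2 : CK b * CK (deltp a b c d r1 r2 r3 r4) * CK c = 0 := by
      rcases mul_eq_zero.mp k1 with h | h
      · rcases mul_eq_zero.mp h with h' | h'
        · exact absurd h' two_nz
        · exact h'
      · exact absurd h (nzXc a)
    have hdlt : deltp a b c d r1 r2 r3 r4 = 0 := by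
      rcases mul_eq_zero.mp k2 with h | h
      · rcases mul_eq_zero.mp h with h' | h'
        · exact absurd h' (CK_ne_zero hb)
        · exact CK_eq_zero h'
      · exact absurd h (CK_ne_zero hc)
    refine ⟨?_, hdlt⟩
    have k3 : RatFunc.X * ((2:RatFunc ℂ) * (CK (epsp a b c d r1 r2 r3 r4) * CK r2)
        - 2 * (CK b * CK (deltp a b c d r1 r2 r3 r4) * (CK a + CK c))) = 0 := by
      linear_combination -e01
    rw [hdlt, map_zero] at k3
    have k4 : CK (epsp a b c d r1 r2 r3 r4) * CK r2 = 0 := by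
      rcases mul_eq_zero.mp k3 with h | h
      · exact absurd h RatFunc.X_ne_zero
      · have : (2:RatFunc ℂ) * (CK (epsp a b c d r1 r2 r3 r4) * CK r2) = 0 := by
          linear_combination h
        rcases mul_eq_zero.mp this with h' | h'
        · exact absurd h' two_nz
        · exact h'
    rcases mul_eq_zero.mp k4 with h | h
    · exact CK_eq_zero h
    · exact absurd h (CK_ne_zero hr2)
  · exfalso
    have hq1' : q' - 1 ≠ 0 := sub_ne_zero.mpr hq1
    have hU : (q' - 1) * (2*RatFunc.X^3 + 2*RatFunc.X*CK ((a^2-b^2-c^2-d^2)/2)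
        - (CK (S11 a b c d r1 r2 r3 r4 0 0) + CK (S11 a b c d r1 r2 r3 r4 1 1)))
        = -(4*CK a*CK c*(CK b * CK (deltp a b c d r1 r2 r3 r4))) := by
      linear_combination -e00 - e11
    have hV : (q' - 1) * (-(2*RatFunc.X^2*CK a) - 2*RatFunc.X*(CK b * CK (deltp a b c d r1 r2 r3 r4))*CK c
        - (CK (S11 a b c d r1 r2 r3 r4 0 0) - CK (S11 a b c d r1 r2 r3 r4 1 1)))
        = 4*RatFunc.X*(CK b * CK (deltp a b c d r1 r2 r3 r4))*CK c := by
      linear_combination -e00 + e11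
    have hcross : (q' - 1) * ((CK b * CK (deltp a b c d r1 r2 r3 r4)) * CK c *
        (RatFunc.X * (2*RatFunc.X^3 + 2*RatFunc.X*CK ((a^2-b^2-c^2-d^2)/2)
          - (CK (S11 a b c d r1 r2 r3 r4 0 0) + CK (S11 a b c d r1 r2 r3 r4 1 1)))
         + CK a * (-(2*RatFunc.X^2*CK a) - 2*RatFunc.X*(CK b * CK (deltp a b c d r1 r2 r3 r4))*CK c
          - (CK (S11 a b c d r1 r2 r3 r4 0 0) - CK (S11 a b c d r1 r2 r3 r4 1 1))))) = 0 := by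
      linear_combination (RatFunc.X*(CK b * CK (deltp a b c d r1 r2 r3 r4))*CK c)*hU
        + (CK a*(CK b * CK (deltp a b c d r1 r2 r3 r4))*CK c)*hV
    have h2 := (mul_eq_zero.mp hcross).resolve_left hq1'
    rcases mul_eq_zero.mp h2 with hbd | hXUAV
    · -- b*dlt*c = 0, so dlt = 0, then U = 0, contradiction
      have hU0 : (q' - 1) * (2*RatFunc.X^3 + 2*RatFunc.X*CK ((a^2-b^2-c^2-d^2)/2)
          - (CK (S11 a b c d r1 r2 r3 r4 0 0) + CK (S11 a b c d r1 r2 r3 r4 1 1))) = 0 := by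
        rw [hU]
        rcases mul_eq_zero.mp hbd with h | h
        · rw [h]; ring
        · rw [h]; ring
      have hUz := (mul_eq_zero.mp hU0).resolve_left hq1'
      have hext := ext5 (-(S11 a b c d r1 r2 r3 r4 0 0 + S11 a b c d r1 r2 r3 r4 1 1))
        (2*((a^2-b^2-c^2-d^2)/2)) 0 2 0 (by
          simp only [map_neg, map_add, _root_.map_mul, map_ofNat, map_zero]
          linear_combination hUz)
      exact two_ne_zero hext.2.2.2.1
    · have hext := ext5 (-(a*(S11 a b c d r1 r2 r3 r4 0 0 - S11 a b c d r1 r2 r3 r4 1 1)))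
        (-(S11 a b c d r1 r2 r3 r4 0 0 + S11 a b c d r1 r2 r3 r4 1 1)
          - 2*a*(b * deltp a b c d r1 r2 r3 r4)*c)
        (2*((a^2-b^2-c^2-d^2)/2) - 2*a^2) 0 2 (by
          simp only [map_neg, map_add, map_sub, _root_.map_mul, map_ofNat, map_zero, map_pow]
          linear_combination hXUAV)
      exact two_ne_zero hext.2.2.2.2

lemma W3 (a b c d r1 r2 r3 r4 : ℂ) (ha : a ≠ 0) (hb : b ≠ 0)
    (h12 : r1 - r2 ≠ 0) (h34 : r3 - r4 ≠ 0)
    (hD : condD a b c d r1 r2 r3 r4)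
    (he : epsv a b c d r1 r2 r3 r4 = 0)
    (hd : deltav a b c d r1 r2 r3 r4 = 0) :
    A1mat a b c d r1 r2 r3 r4 = A1star a b c d := by
  have h21 : r2 - r1 ≠ 0 := fun h => h12 (by linear_combination -h)
  have h43 : r4 - r3 ≠ 0 := fun h => h34 (by linear_combination -h)
  have h4a : (4:ℂ)*a ≠ 0 := by simpa using ha
  have h4b : (4:ℂ)*b ≠ 0 := by simpa using hb
  have hD2 : (a+b+c)^2*r1*r3 - (a-b+c)^2*r1*r4 - (a-b-c)^2*r2*r3 + (a+b-c)^2*r2*r4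
      - 4*a*b*(r1*r2) - 4*a*b*(r3*r4) = d^2*((r1-r2)*(r3-r4)) := by
    rw [condD, div_eq_iff (mul_ne_zero h12 h34)] at hD
    exact hD
  have he' : b*(a+c)*r1 + b*(a-c)*r2 - a*(b+c)*r3 - a*(b-c)*r4 = 0 := he
  have hd' : r1*r2 - r3*r4 = 0 := hd
  ext i j
  fin_cases i <;> fin_cases j <;>
    simp [A1mat, A1star]
  · rw [div_eq_div_iff h12 h4a]
    exact mul_right_cancel₀ h34 (by linear_combination (4*r3)*he' - (4*a*b)*hd' - hD2)
  · rw [div_eq_div_iff h21 h4a]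
    exact mul_right_cancel₀ h34 (by linear_combination (-4*r4)*he' + (4*a*b)*hd' + hD2)
  · rw [div_eq_div_iff h21 h4a]
    exact mul_right_cancel₀ h34 (by linear_combination (4*r3)*he' - (4*a*b)*hd' - hD2)
  · rw [div_eq_div_iff h12 h4a]
    exact mul_right_cancel₀ h34 (by linear_combination (-4*r4)*he' + (4*a*b)*hd' + hD2)
  · rw [div_eq_div_iff h43 h4b]
    exact mul_right_cancel₀ h12 (by linear_combination (4*r1)*he' - (4*a*b)*hd' + hD2)
  · rw [div_eq_div_iff h34 h4b]
    exact mul_right_cancel₀ h12 (by linear_combination (-4*r2)*he' + (4*a*b)*hd' - hD2)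
  · rw [div_eq_div_iff h34 h4b]
    exact mul_right_cancel₀ h12 (by linear_combination (4*r1)*he' - (4*a*b)*hd' + hD2)
  · rw [div_eq_div_iff h43 h4b]
    exact mul_right_cancel₀ h12 (by linear_combination (-4*r2)*he' + (4*a*b)*hd' - hD2)

lemma W1 (a b c d r1 r2 r3 r4 : ℂ) (ha : a ≠ 0) (hb : b ≠ 0)
    (h12 : r1 - r2 ≠ 0) (h34 : r3 - r4 ≠ 0)
    (hA : A1mat a b c d r1 r2 r3 r4 = A1star a b c d) :
    epsv a b c d r1 r2 r3 r4 = 0 ∧ deltav a b c d r1 r2 r3 r4 = 0 := by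
  have h21 : r2 - r1 ≠ 0 := fun h => h12 (by linear_combination -h)
  have h43 : r4 - r3 ≠ 0 := fun h => h34 (by linear_combination -h)
  have h4a : (4:ℂ)*a ≠ 0 := by simpa using ha
  have h4b : (4:ℂ)*b ≠ 0 := by simpa using hb
  have e02 := congrFun (congrFun hA 0) 2
  have e03 := congrFun (congrFun hA 0) 3
  have e20 := congrFun (congrFun hA 2) 0
  simp [A1mat, A1star] at e02 e03 e20
  rw [div_eq_div_iff h12 h4a] at e02
  rw [div_eq_div_iff h21 h4a] at e03
  rw [div_eq_div_iff h43 h4b] at e20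
  constructor
  · show b*(a+c)*r1 + b*(a-c)*r2 - a*(b+c)*r3 - a*(b-c)*r4 = 0
    linear_combination (1/4)*e02 + (1/4)*e03
  · have key : a*b*(r1*r2 - r3*r4) = 0 := by
      linear_combination ((r4+r1)/8)*e02 + ((r3+r1)/8)*e03 + ((r2-r1)/8)*e20
    have := mul_eq_zero.mp key
    rcases this with h | h
    · exact absurd h (mul_ne_zero ha hb)
    · exact h

/-- Theorem `thm:main`: the difference systems near x = 1 and
x = ∞ are substantially the same iff A₁ = A₁*. -/
theorem stmt_4 (a b c d r1 r2 r3 r4 : ℂ)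
    (hB : condB a b c d) (hR : condR r1 r2 r3 r4) (hD : condD a b c d r1 r2 r3 r4) :
    (∃ q : RatFunc ℂ, q ≠ 0 ∧
      (-(((RatFunc.X : RatFunc ℂ) + 1) * ((RatFunc.X : RatFunc ℂ)^2 - CK (b^2))))⁻¹ • Mg a b c d r1 r2 r3 r4
        = q • ((-((RatFunc.X : RatFunc ℂ) - 1) / (((RatFunc.X : RatFunc ℂ)^2 - CK (c^2)) * ((RatFunc.X : RatFunc ℂ)^2 - CK (d^2))))
            • Mh a b c d r1 r2 r3 r4)) ↔
    A1mat a b c d r1 r2 r3 r4 = A1star a b c d := by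
  obtain ⟨hRnz, hr12, hr34⟩ := hR
  have ha : a ≠ 0 := by have := (hB 0).1; simpa using this
  have hb : b ≠ 0 := by have := (hB 0).2.1; simpa using this
  have hc : c ≠ 0 := by have := (hB 0).2.2.1; simpa using this
  have hr2 : r2 ≠ 0 := by intro h; apply hRnz; rw [h]; ring
  have h12 : r1 - r2 ≠ 0 := sub_ne_zero.mpr hr12
  have h34 : r3 - r4 ≠ 0 := sub_ne_zero.mpr hr34
  have hw : (r1-r2)*(r3-r4) ≠ 0 := mul_ne_zero h12 h34
  have hf : (-((RatFunc.X + 1) * (RatFunc.X^2 - CK (b^2))) : RatFunc ℂ) ≠ 0 :=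
    neg_ne_zero.mpr (mul_ne_zero nzX1 (nzX2 _))
  have hgs : (-(RatFunc.X - 1) / ((RatFunc.X^2 - CK (c^2)) * (RatFunc.X^2 - CK (d^2)))
      : RatFunc ℂ) ≠ 0 :=
    div_ne_zero (neg_ne_zero.mpr nzXm1) (mul_ne_zero (nzX2 _) (nzX2 _))
  constructor
  · rintro ⟨q, hq, hEq⟩
    rw [smul_smul, inv_smul_eq_iff₀ hf, smul_smul] at hEq
    obtain ⟨heps', hdlt'⟩ := Wfwd a b c d r1 r2 r3 r4 ha hb hc hr2 _ hEq
    rw [epsp] at heps'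
    rw [deltp] at hdlt'
    have heps : epsv a b c d r1 r2 r3 r4 = 0 := by
      have h2 := (div_eq_zero_iff.mp heps').resolve_right hw
      rcases mul_eq_zero.mp h2 with h | h
      · exact absurd h two_ne_zero
      · exact h
    have hdlt : deltav a b c d r1 r2 r3 r4 = 0 := by
      have h2 := (div_eq_zero_iff.mp hdlt').resolve_right hw
      rcases mul_eq_zero.mp h2 with h | h
      · exact absurd h two_ne_zero
      · exact h
    exact W3 a b c d r1 r2 r3 r4 ha hb h12 h34 hD heps hdlt
  · intro hA
    obtain ⟨heps, hdlt⟩ := W1 a b c d r1 r2 r3 r4 ha hb h12 h34 hA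
    have heps' : epsp a b c d r1 r2 r3 r4 = 0 := by rw [epsp, heps]; simp
    have hdlt' : deltp a b c d r1 r2 r3 r4 = 0 := by rw [deltp, hdlt]; simp
    have hMgMh := MgeqMh a b c d r1 r2 r3 r4 heps' hdlt'
    refine ⟨(-((RatFunc.X + 1) * (RatFunc.X^2 - CK (b^2))))⁻¹
        * (-(RatFunc.X - 1) / ((RatFunc.X^2 - CK (c^2)) * (RatFunc.X^2 - CK (d^2))))⁻¹,
      mul_ne_zero (inv_ne_zero hf) (inv_ne_zero hgs), ?_⟩
    rw [hMgMh, smul_smul]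
    congr 1
    rw [mul_assoc, inv_mul_cancel₀ hgs, mul_one]
end
end

section
/- Assume conditions (R) and (D) for complex numbers a, b, c, d, r₁, r₂, r₃, r₄. Then A₁₂'·A₂₁' = ((c²+d²−a²−b²)/2)·I₂ + ε'·[[0, r₂],[r₁, 0]] − bδ'·[[c, a+c],[a−c, −c]]. -/
set_option maxHeartbeats 1000000
set_option synthInstance.maxHeartbeats 1000000
set_option linter.unusedVariables false

noncomputable section
open Matrix

/-- the product A₁₂′·A₂₁′. -/
theorem stmt_10 (a b c d r1 r2 r3 r4 : ℂ)
    (hR : condR r1 r2 r3 r4) (hD : condD a b c d r1 r2 r3 r4) :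
    A12p a b c d r1 r2 r3 r4 * A21p a b c d r1 r2 r3 r4 =
      ((c^2+d^2-a^2-b^2)/2) • (1 : Matrix (Fin 2) (Fin 2) ℂ)
        + (epsp a b c d r1 r2 r3 r4) • !![0, r2; r1, 0]
        - (b * deltp a b c d r1 r2 r3 r4) • !![c, a+c; a-c, -c] := by

  obtain ⟨hne, h12, h34⟩ := hR
  have h12' : r1 - r2 ≠ 0 := sub_ne_zero.mpr h12
  have h34' : r3 - r4 ≠ 0 := sub_ne_zero.mpr h34
  have h21' : r2 - r1 ≠ 0 := sub_ne_zero.mpr (Ne.symm h12)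
  have h43' : r4 - r3 ≠ 0 := sub_ne_zero.mpr (Ne.symm h34)
  have hd2 : d^2 = ((a+b+c)^2*r1*r3 - (a-b+c)^2*r1*r4 - (a-b-c)^2*r2*r3 + (a+b-c)^2*r2*r4
      - 4*a*b*(r1*r2) - 4*a*b*(r3*r4)) / ((r1-r2)*(r3-r4)) := hD.symm
  unfold A12p A21p epsp deltp epsv deltav
  ext i j
  fin_cases i <;> fin_cases j <;>
    simp [Matrix.mul_apply, Fin.sum_univ_succ, Matrix.one_apply] <;>
    (try rw [hd2]) <;> field_simp <;> ring
end
end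

section
/- Assume condition (R) for complex numbers a, b, c, d, r₁, r₂, r₃, r₄. Then the trace of the 2×2 matrix A₁₂'·J·A₂₁' equals 2acδ', where δ' = 2(r₁r₂ − r₃r₄)/((r₁−r₂)(r₃−r₄)). -/
/-! Pulling the denominators `r₁ - r₂` and `r₃ - r₄` out of `A₁₂'` and `A₂₁'` leaves polynomial
matrices `P`, `Q`, and `tr (P J Q) = 4ac (r₁r₂ - r₃r₄)` is a polynomial identity. -/

set_option maxHeartbeats 1000000
set_option synthInstance.maxHeartbeats 1000000
set_option linter.unusedVariables false

noncomputable section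
open Matrix

lemma trace_mul_Jmat_mul (M N : Matrix (Fin 2) (Fin 2) ℂ) :
    trace (M * Jmat * N) = M 0 0 * N 0 0 - M 0 1 * N 1 0 + M 1 0 * N 0 1 - M 1 1 * N 1 1 := by
  simp only [Jmat, trace_fin_two, mul_apply, Fin.sum_univ_two, of_apply, cons_val', cons_val_zero,
    cons_val_one, empty_val', cons_val_fin_one]
  ring

lemma A12p_eq_inv_smul (a b c d r1 r2 r3 r4 : ℂ) :
    A12p a b c d r1 r2 r3 r4 = (r1 - r2)⁻¹ •
      !![(b-c)*r2-(b+c)*r3, (b-c)*r4-(b+c)*r2; (b+c)*r3-(b-c)*r1, (b+c)*r1-(b-c)*r4] := by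
  rw [A12p, ← neg_sub r1 r2]
  ext i j
  fin_cases i <;> fin_cases j <;>
    simp only [div_eq_inv_mul, inv_neg, neg_mul, Fin.zero_eta, Fin.mk_one, Fin.isValue, of_apply,
      cons_val', cons_val_zero, cons_val_one, cons_val_fin_one, Matrix.smul_apply, smul_eq_mul] <;>
    ring

lemma A21p_eq_inv_smul (a b c d r1 r2 r3 r4 : ℂ) :
    A21p a b c d r1 r2 r3 r4 = (r3 - r4)⁻¹ •
      !![(a-c)*r4-(a+c)*r1, (a-c)*r2-(a+c)*r4; (a+c)*r1-(a-c)*r3, (a+c)*r3-(a-c)*r2] := by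
  rw [A21p, ← neg_sub r3 r4]
  ext i j
  fin_cases i <;> fin_cases j <;>
    simp only [div_eq_inv_mul, inv_neg, neg_mul, Fin.zero_eta, Fin.mk_one, Fin.isValue, of_apply,
      cons_val', cons_val_zero, cons_val_one, cons_val_fin_one, Matrix.smul_apply, smul_eq_mul] <;>
    ring

theorem stmt_11_general (a b c d r1 r2 r3 r4 : ℂ) :
    Matrix.trace (A12p a b c d r1 r2 r3 r4 * Jmat * A21p a b c d r1 r2 r3 r4)
      = 2*a*c * (2*(r1*r2 - r3*r4)/((r1-r2)*(r3-r4))) := by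
  simp only [A12p_eq_inv_smul, A21p_eq_inv_smul, smul_mul_assoc, mul_smul_comm, trace_smul,
    trace_mul_Jmat_mul, of_apply, cons_val', cons_val_zero, cons_val_one, empty_val',
    cons_val_fin_one, smul_eq_mul, div_eq_mul_inv, mul_inv]
  ring

/-- trace of A₁₂′·J·A₂₁′ equals 2acδ′. -/
theorem stmt_11 (a b c d r1 r2 r3 r4 : ℂ)
    (hR : condR r1 r2 r3 r4) :
    Matrix.trace (A12p a b c d r1 r2 r3 r4 * Jmat * A21p a b c d r1 r2 r3 r4)
      = 2*a*c * (2*(r1*r2 - r3*r4)/((r1-r2)*(r3-r4))) :=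
  stmt_11_general a b c d r1 r2 r3 r4
end
end
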